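/- arXiv:2110.12860 — 2 statements merged into one kernel-verified Lean document; each statement's English description precedes it below -/
import Mathlib

section
/- Let T = q1⁴(q2−3q1)p1²/(q1−q2) + q2⁴(q1−3q2)p2²/(q2−q1) and K = q1q2(q1²p1−q2²p2)(q1²p1+q2²p2)²/(q1−q2). Then {T,K} = 0 identically on the open set where q1 ≠ q2. -/
/-- Canonical Poisson bracket of two functions on phase space (q1,q2,p1,p2). -/
noncomputable def pb (f g : ℝ → ℝ → ℝ → ℝ → ℝ) (q1 q2 p1 p2 : ℝ) : ℝ :=
  (deriv (fun x => f x q2 p1 p2) q1) * (deriv (fun x => g q1 q2 x p2) p1)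
  - (deriv (fun x => f q1 q2 x p2) p1) * (deriv (fun x => g x q2 p1 p2) q1)
  + (deriv (fun x => f q1 x p1 p2) q2) * (deriv (fun x => g q1 q2 p1 x) p2)
  - (deriv (fun x => f q1 q2 p1 x) p2) * (deriv (fun x => g q1 x p1 p2) q2)

noncomputable def T (q1 q2 p1 p2 : ℝ) : ℝ :=
  q1^4 * (q2 - 3*q1) * p1^2 / (q1 - q2) + q2^4 * (q1 - 3*q2) * p2^2 / (q2 - q1)

noncomputable def K (q1 q2 p1 p2 : ℝ) : ℝ :=
  q1 * q2 * (q1^2*p1 - q2^2*p2) * (q1^2*p1 + q2^2*p2)^2 / (q1 - q2)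

theorem stmt8 (q1 q2 p1 p2 : ℝ) (h : q1 ≠ q2) :
    pb T K q1 q2 p1 p2 = 0 := by
  have hd : q1 - q2 ≠ 0 := sub_ne_zero.mpr h
  have hd' : q2 - q1 ≠ 0 := sub_ne_zero.mpr (Ne.symm h)
  have hTq1 := ((((hasDerivAt_pow 4 q1).mul
        (((hasDerivAt_id q1).const_mul 3).const_sub q2)).mul_const (p1 ^ 2)).div
        ((hasDerivAt_id q1).sub_const q2) hd).add
      (((((hasDerivAt_id q1).sub_const (3 * q2)).const_mul (q2 ^ 4)).mul_const (p2 ^ 2)).div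
        ((hasDerivAt_id q1).const_sub q2) hd')
  have hTq2 := (((((hasDerivAt_id q2).sub_const (3 * q1)).const_mul (q1 ^ 4)).mul_const
        (p1 ^ 2)).div ((hasDerivAt_id q2).const_sub q1) hd).add
      ((((hasDerivAt_pow 4 q2).mul
        (((hasDerivAt_id q2).const_mul 3).const_sub q1)).mul_const (p2 ^ 2)).div
        ((hasDerivAt_id q2).sub_const q1) hd')
  have hTp1 := (((hasDerivAt_pow 2 p1).const_mul (q1 ^ 4 * (q2 - 3 * q1))).div_const
        (q1 - q2)).add_const (q2 ^ 4 * (q1 - 3 * q2) * p2 ^ 2 / (q2 - q1))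
  have hTp2 := (((hasDerivAt_pow 2 p2).const_mul (q2 ^ 4 * (q1 - 3 * q2))).div_const
        (q2 - q1)).const_add (q1 ^ 4 * (q2 - 3 * q1) * p1 ^ 2 / (q1 - q2))
  have hKq1 := ((((hasDerivAt_id q1).mul_const q2).mul
        (((hasDerivAt_pow 2 q1).mul_const p1).sub_const (q2 ^ 2 * p2))).mul
        ((((hasDerivAt_pow 2 q1).mul_const p1).add_const (q2 ^ 2 * p2)).pow 2)).div
        ((hasDerivAt_id q1).sub_const q2) hd
  have hKq2 := ((((hasDerivAt_id q2).const_mul q1).mul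
        (((hasDerivAt_pow 2 q2).mul_const p2).const_sub (q1 ^ 2 * p1))).mul
        ((((hasDerivAt_pow 2 q2).mul_const p2).const_add (q1 ^ 2 * p1)).pow 2)).div
        ((hasDerivAt_id q2).const_sub q1) hd
  have hKp1 := (((((hasDerivAt_id p1).const_mul (q1 ^ 2)).sub_const (q2 ^ 2 * p2)).const_mul
        (q1 * q2)).mul
        ((((hasDerivAt_id p1).const_mul (q1 ^ 2)).add_const (q2 ^ 2 * p2)).pow 2)).div_const
        (q1 - q2)
  have hKp2 := (((((hasDerivAt_id p2).const_mul (q2 ^ 2)).const_sub (q1 ^ 2 * p1)).const_mul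
        (q1 * q2)).mul
        ((((hasDerivAt_id p2).const_mul (q2 ^ 2)).const_add (q1 ^ 2 * p1)).pow 2)).div_const
        (q1 - q2)
  simp only [id_eq, Pi.mul_def, Pi.div_def, Pi.add_def, Pi.pow_def] at hTq1 hTq2 hTp1 hTp2 hKq1 hKq2 hKp1 hKp2
  have e1 : (fun x => T x q2 p1 p2) =
      fun x => x ^ 4 * (q2 - 3 * x) * p1 ^ 2 / (x - q2)
        + q2 ^ 4 * (x - 3 * q2) * p2 ^ 2 / (q2 - x) := by funext x; simp [T]
  have e2 : (fun x => T q1 x p1 p2) =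
      fun x => q1 ^ 4 * (x - 3 * q1) * p1 ^ 2 / (q1 - x)
        + x ^ 4 * (q1 - 3 * x) * p2 ^ 2 / (x - q1) := by funext x; simp [T]
  have e3 : (fun x => T q1 q2 x p2) =
      fun x => q1 ^ 4 * (q2 - 3 * q1) * x ^ 2 / (q1 - q2)
        + q2 ^ 4 * (q1 - 3 * q2) * p2 ^ 2 / (q2 - q1) := by funext x; simp [T]
  have e4 : (fun x => T q1 q2 p1 x) =
      fun x => q1 ^ 4 * (q2 - 3 * q1) * p1 ^ 2 / (q1 - q2)
        + q2 ^ 4 * (q1 - 3 * q2) * x ^ 2 / (q2 - q1) := by funext x; simp [T]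
  have e5 : (fun x => K x q2 p1 p2) =
      fun x => x * q2 * (x ^ 2 * p1 - q2 ^ 2 * p2) * (x ^ 2 * p1 + q2 ^ 2 * p2) ^ 2
        / (x - q2) := by funext x; simp [K]
  have e6 : (fun x => K q1 x p1 p2) =
      fun x => q1 * x * (q1 ^ 2 * p1 - x ^ 2 * p2) * (q1 ^ 2 * p1 + x ^ 2 * p2) ^ 2
        / (q1 - x) := by funext x; simp [K]
  have e7 : (fun x => K q1 q2 x p2) =
      fun x => q1 * q2 * (q1 ^ 2 * x - q2 ^ 2 * p2) * (q1 ^ 2 * x + q2 ^ 2 * p2) ^ 2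
        / (q1 - q2) := by funext x; simp [K]
  have e8 : (fun x => K q1 q2 p1 x) =
      fun x => q1 * q2 * (q1 ^ 2 * p1 - q2 ^ 2 * x) * (q1 ^ 2 * p1 + q2 ^ 2 * x) ^ 2
        / (q1 - q2) := by funext x; simp [K]
  unfold pb
  rw [e1, e2, e3, e4, e5, e6, e7, e8,
      hTq1.deriv, hTq2.deriv, hTp1.deriv, hTp2.deriv,
      hKq1.deriv, hKq2.deriv, hKp1.deriv, hKp2.deriv]
  push_cast
  field_simp
  ring
end

section
/- Let T = q1⁴(q2−3q1)p1²/(q1−q2) + q2⁴(q1−3q2)p2²/(q2−q1) and L = (q1²p1−q2²p2)²·(q1⁴(3q1²−2q1q2+q2²)p1² + 2q1²q2²(q1²+q2²)p1p2 + q2⁴(q1²−2q1q2+3q2²)p2²)/(4(q1−q2)²). Then {T,L} = 0, and moreover with K = q1q2(q1²p1−q2²p2)(q1²p1+q2²p2)²/(q1−q2) one has {L,K} = K², identically on the open set where q1 ≠ q2. -/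
private lemma hd_congr {f : ℝ → ℝ} {v w x : ℝ} (h : HasDerivAt f v x) (e : v = w) :
    HasDerivAt f w x := e ▸ h

private lemma hasDerivAt_P (a0 a1 a2 a3 a4 a5 a6 a7 a8 a9 a10 x : ℝ) :
    HasDerivAt (fun t : ℝ => a0 + a1 * t + a2 * t ^ 2 + a3 * t ^ 3 + a4 * t ^ 4 + a5 * t ^ 5
        + a6 * t ^ 6 + a7 * t ^ 7 + a8 * t ^ 8 + a9 * t ^ 9 + a10 * t ^ 10)
      (a1 + 2*a2*x + 3*a3*x^2 + 4*a4*x^3 + 5*a5*x^4 + 6*a6*x^5 + 7*a7*x^6 + 8*a8*x^7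
        + 9*a9*x^8 + 10*a10*x^9) x := by
  refine hd_congr ((((((((((((hasDerivAt_const x a0).add ((hasDerivAt_id x).const_mul a1)).add
    ((hasDerivAt_pow 2 x).const_mul a2)).add ((hasDerivAt_pow 3 x).const_mul a3)).add
    ((hasDerivAt_pow 4 x).const_mul a4)).add ((hasDerivAt_pow 5 x).const_mul a5)).add
    ((hasDerivAt_pow 6 x).const_mul a6)).add ((hasDerivAt_pow 7 x).const_mul a7)).add
    ((hasDerivAt_pow 8 x).const_mul a8)).add ((hasDerivAt_pow 9 x).const_mul a9)).add
    ((hasDerivAt_pow 10 x).const_mul a10))) ?_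
  push_cast
  ring

private lemma deriv_P_div_const (a0 a1 a2 a3 a4 a5 a6 a7 a8 a9 a10 D x : ℝ) :
    deriv (fun t : ℝ => (a0 + a1 * t + a2 * t ^ 2 + a3 * t ^ 3 + a4 * t ^ 4 + a5 * t ^ 5
        + a6 * t ^ 6 + a7 * t ^ 7 + a8 * t ^ 8 + a9 * t ^ 9 + a10 * t ^ 10) / D) x
      = (a1 + 2*a2*x + 3*a3*x^2 + 4*a4*x^3 + 5*a5*x^4 + 6*a6*x^5 + 7*a7*x^6 + 8*a8*x^7
        + 9*a9*x^8 + 10*a10*x^9) / D :=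
  ((hasDerivAt_P a0 a1 a2 a3 a4 a5 a6 a7 a8 a9 a10 x).div_const D).deriv

private lemma deriv_P_div_lin (a0 a1 a2 a3 a4 a5 a6 a7 a8 a9 a10 c x : ℝ) (hx : x - c ≠ 0) :
    deriv (fun t : ℝ => (a0 + a1 * t + a2 * t ^ 2 + a3 * t ^ 3 + a4 * t ^ 4 + a5 * t ^ 5
        + a6 * t ^ 6 + a7 * t ^ 7 + a8 * t ^ 8 + a9 * t ^ 9 + a10 * t ^ 10) / (t - c)) x
      = ((a1 + 2*a2*x + 3*a3*x^2 + 4*a4*x^3 + 5*a5*x^4 + 6*a6*x^5 + 7*a7*x^6 + 8*a8*x^7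
        + 9*a9*x^8 + 10*a10*x^9) * (x - c)
        - (a0 + a1 * x + a2 * x ^ 2 + a3 * x ^ 3 + a4 * x ^ 4 + a5 * x ^ 5
        + a6 * x ^ 6 + a7 * x ^ 7 + a8 * x ^ 8 + a9 * x ^ 9 + a10 * x ^ 10)) / (x - c) ^ 2 := by
  have hden : HasDerivAt (fun t : ℝ => t - c) 1 x := (hasDerivAt_id x).sub_const c
  have hh := ((hasDerivAt_P a0 a1 a2 a3 a4 a5 a6 a7 a8 a9 a10 x).div hden hx).deriv
  refine hh.trans ?_; ring

private lemma deriv_P_div_sq (a0 a1 a2 a3 a4 a5 a6 a7 a8 a9 a10 c x : ℝ) (hx : x - c ≠ 0) :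
    deriv (fun t : ℝ => (a0 + a1 * t + a2 * t ^ 2 + a3 * t ^ 3 + a4 * t ^ 4 + a5 * t ^ 5
        + a6 * t ^ 6 + a7 * t ^ 7 + a8 * t ^ 8 + a9 * t ^ 9 + a10 * t ^ 10) / (t - c) ^ 2) x
      = ((a1 + 2*a2*x + 3*a3*x^2 + 4*a4*x^3 + 5*a5*x^4 + 6*a6*x^5 + 7*a7*x^6 + 8*a8*x^7
        + 9*a9*x^8 + 10*a10*x^9) * (x - c) ^ 2
        - (a0 + a1 * x + a2 * x ^ 2 + a3 * x ^ 3 + a4 * x ^ 4 + a5 * x ^ 5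
        + a6 * x ^ 6 + a7 * x ^ 7 + a8 * x ^ 8 + a9 * x ^ 9 + a10 * x ^ 10) * (2 * (x - c)))
        / ((x - c) ^ 2) ^ 2 := by
  have hden : HasDerivAt (fun t : ℝ => (t - c) ^ 2) (2 * (x - c)) x := by
    have := ((hasDerivAt_id x).sub_const c).pow 2
    simp at this; exact this
  have hh := ((hasDerivAt_P a0 a1 a2 a3 a4 a5 a6 a7 a8 a9 a10 x).div hden
    (pow_ne_zero 2 hx)).deriv
  exact hh
noncomputable def L (q1 q2 p1 p2 : ℝ) : ℝ :=
  (q1^2*p1 - q2^2*p2)^2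
  * (q1^4*(3*q1^2 - 2*q1*q2 + q2^2)*p1^2
     + 2*q1^2*q2^2*(q1^2 + q2^2)*p1*p2
     + q2^4*(q1^2 - 2*q1*q2 + 3*q2^2)*p2^2)
  / (4*(q1 - q2)^2)


lemma dT_q1 (q1 q2 p1 p2 : ℝ) (h : q1 - q2 ≠ 0) :
    deriv (fun x => T x q2 p1 p2) q1 = ((-2)*q2^5*p2^2 + (-4)*q1^3*q2^2*p1^2 + 18*q1^4*q2*p1^2 + (-12)*q1^5*p1^2) / (q1 - q2) ^ 2 := by
  have h' : q2 - q1 ≠ 0 := fun hc => h (by linarith [sub_eq_zero.mp hc])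
  have hfe : (fun x => T x q2 p1 p2) = (fun t => ((3*q2^5*p2^2) + ((-1)*q2^4*p2^2) * t + (0) * t ^ 2 + (0) * t ^ 3 + (q2*p1^2) * t ^ 4 + ((-3)*p1^2) * t ^ 5 + (0) * t ^ 6 + (0) * t ^ 7 + (0) * t ^ 8 + (0) * t ^ 9 + (0) * t ^ 10) / (t - q2)) := by
    funext t
    rcases eq_or_ne t q2 with rfl | ht
    · simp [T]
    · have h2 : t - q2 ≠ 0 := sub_ne_zero.mpr ht
      have h3 : q2 - t ≠ 0 := fun hc => h2 (by linarith [sub_eq_zero.mp hc])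
      simp only [T]
      field_simp
      ring
  rw [hfe, deriv_P_div_lin (hx := h)]
  field_simp
  ring

lemma dT_q2 (q1 q2 p1 p2 : ℝ) (h : q1 - q2 ≠ 0) :
    deriv (fun x => T q1 x p1 p2) q2 = ((-12)*q2^5*p2^2 + 18*q1*q2^4*p2^2 + (-4)*q1^2*q2^3*p2^2 + (-2)*q1^5*p1^2) / (q1 - q2) ^ 2 := by
  have h' : q2 - q1 ≠ 0 := fun hc => h (by linarith [sub_eq_zero.mp hc])
  have hfe : (fun x => T q1 x p1 p2) = (fun t => ((3*q1^5*p1^2) + ((-1)*q1^4*p1^2) * t + (0) * t ^ 2 + (0) * t ^ 3 + (q1*p2^2) * t ^ 4 + ((-3)*p2^2) * t ^ 5 + (0) * t ^ 6 + (0) * t ^ 7 + (0) * t ^ 8 + (0) * t ^ 9 + (0) * t ^ 10) / (t - q1)) := by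
    funext t
    rcases eq_or_ne t q1 with rfl | ht
    · simp [T]
    · have h2 : t - q1 ≠ 0 := sub_ne_zero.mpr ht
      have h3 : q1 - t ≠ 0 := fun hc => h2 (by linarith [sub_eq_zero.mp hc])
      simp only [T]
      field_simp
      ring
  rw [hfe, deriv_P_div_lin (hx := h')]
  field_simp
  ring

lemma dT_p1 (q1 q2 p1 p2 : ℝ) (h : q1 - q2 ≠ 0) :
    deriv (fun x => T q1 q2 x p2) p1 = (2*q1^4*q2*p1 + (-6)*q1^5*p1) / (q1 - q2) ^ 1 := by
  have h' : q2 - q1 ≠ 0 := fun hc => h (by linarith [sub_eq_zero.mp hc])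
  have hfe : (fun x => T q1 q2 x p2) = (fun t => ((3*q2^5*p2^2 + (-1)*q1*q2^4*p2^2) + (0) * t + (q1^4*q2 + (-3)*q1^5) * t ^ 2 + (0) * t ^ 3 + (0) * t ^ 4 + (0) * t ^ 5 + (0) * t ^ 6 + (0) * t ^ 7 + (0) * t ^ 8 + (0) * t ^ 9 + (0) * t ^ 10) / (q1 - q2)) := by
    funext t
    simp only [T]
    field_simp
    ring
  rw [hfe, deriv_P_div_const]
  field_simp
  ring

lemma dT_p2 (q1 q2 p1 p2 : ℝ) (h : q1 - q2 ≠ 0) :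
    deriv (fun x => T q1 q2 p1 x) p2 = (6*q2^5*p2 + (-2)*q1*q2^4*p2) / (q1 - q2) ^ 1 := by
  have h' : q2 - q1 ≠ 0 := fun hc => h (by linarith [sub_eq_zero.mp hc])
  have hfe : (fun x => T q1 q2 p1 x) = (fun t => ((q1^4*q2*p1^2 + (-3)*q1^5*p1^2) + (0) * t + (3*q2^5 + (-1)*q1*q2^4) * t ^ 2 + (0) * t ^ 3 + (0) * t ^ 4 + (0) * t ^ 5 + (0) * t ^ 6 + (0) * t ^ 7 + (0) * t ^ 8 + (0) * t ^ 9 + (0) * t ^ 10) / (q1 - q2)) := by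
    funext t
    simp only [T]
    field_simp
    ring
  rw [hfe, deriv_P_div_const]
  field_simp
  ring

lemma dK_q1 (q1 q2 p1 p2 : ℝ) (h : q1 - q2 ≠ 0) :
    deriv (fun x => K x q2 p1 p2) q1 = (q2^8*p2^3 + 3*q1^2*q2^6*p1*p2^2 + (-2)*q1^3*q2^5*p1*p2^2 + (-5)*q1^4*q2^4*p1^2*p2 + 4*q1^5*q2^3*p1^2*p2 + (-7)*q1^6*q2^2*p1^3 + 6*q1^7*q2*p1^3) / (q1 - q2) ^ 2 := by
  have h' : q2 - q1 ≠ 0 := fun hc => h (by linarith [sub_eq_zero.mp hc])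
  have hfe : (fun x => K x q2 p1 p2) = (fun t => ((0) + ((-1)*q2^7*p2^3) * t + (0) * t ^ 2 + ((-1)*q2^5*p1*p2^2) * t ^ 3 + (0) * t ^ 4 + (q2^3*p1^2*p2) * t ^ 5 + (0) * t ^ 6 + (q2*p1^3) * t ^ 7 + (0) * t ^ 8 + (0) * t ^ 9 + (0) * t ^ 10) / (t - q2)) := by
    funext t
    rcases eq_or_ne t q2 with rfl | ht
    · simp [K]
    · have h2 : t - q2 ≠ 0 := sub_ne_zero.mpr ht
      have h3 : q2 - t ≠ 0 := fun hc => h2 (by linarith [sub_eq_zero.mp hc])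
      simp only [K]
      field_simp
      ring
  rw [hfe, deriv_P_div_lin (hx := h)]
  field_simp
  ring

lemma dK_q2 (q1 q2 p1 p2 : ℝ) (h : q1 - q2 ≠ 0) :
    deriv (fun x => K q1 x p1 p2) q2 = (6*q1*q2^7*p2^3 + (-7)*q1^2*q2^6*p2^3 + 4*q1^3*q2^5*p1*p2^2 + (-5)*q1^4*q2^4*p1*p2^2 + (-2)*q1^5*q2^3*p1^2*p2 + 3*q1^6*q2^2*p1^2*p2 + q1^8*p1^3) / (q1 - q2) ^ 2 := by
  have h' : q2 - q1 ≠ 0 := fun hc => h (by linarith [sub_eq_zero.mp hc])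
  have hfe : (fun x => K q1 x p1 p2) = (fun t => ((0) + ((-1)*q1^7*p1^3) * t + (0) * t ^ 2 + ((-1)*q1^5*p1^2*p2) * t ^ 3 + (0) * t ^ 4 + (q1^3*p1*p2^2) * t ^ 5 + (0) * t ^ 6 + (q1*p2^3) * t ^ 7 + (0) * t ^ 8 + (0) * t ^ 9 + (0) * t ^ 10) / (t - q1)) := by
    funext t
    rcases eq_or_ne t q1 with rfl | ht
    · simp [K]
    · have h2 : t - q1 ≠ 0 := sub_ne_zero.mpr ht
      have h3 : q1 - t ≠ 0 := fun hc => h2 (by linarith [sub_eq_zero.mp hc])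
      simp only [K]
      field_simp
      ring
  rw [hfe, deriv_P_div_lin (hx := h')]
  field_simp
  ring

lemma dK_p1 (q1 q2 p1 p2 : ℝ) (h : q1 - q2 ≠ 0) :
    deriv (fun x => K q1 q2 x p2) p1 = ((-1)*q1^3*q2^5*p2^2 + 2*q1^5*q2^3*p1*p2 + 3*q1^7*q2*p1^2) / (q1 - q2) ^ 1 := by
  have h' : q2 - q1 ≠ 0 := fun hc => h (by linarith [sub_eq_zero.mp hc])
  have hfe : (fun x => K q1 q2 x p2) = (fun t => (((-1)*q1*q2^7*p2^3) + ((-1)*q1^3*q2^5*p2^2) * t + (q1^5*q2^3*p2) * t ^ 2 + (q1^7*q2) * t ^ 3 + (0) * t ^ 4 + (0) * t ^ 5 + (0) * t ^ 6 + (0) * t ^ 7 + (0) * t ^ 8 + (0) * t ^ 9 + (0) * t ^ 10) / (q1 - q2)) := by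
    funext t
    simp only [K]
    field_simp
    ring
  rw [hfe, deriv_P_div_const]
  field_simp
  ring

lemma dK_p2 (q1 q2 p1 p2 : ℝ) (h : q1 - q2 ≠ 0) :
    deriv (fun x => K q1 q2 p1 x) p2 = ((-3)*q1*q2^7*p2^2 + (-2)*q1^3*q2^5*p1*p2 + q1^5*q2^3*p1^2) / (q1 - q2) ^ 1 := by
  have h' : q2 - q1 ≠ 0 := fun hc => h (by linarith [sub_eq_zero.mp hc])
  have hfe : (fun x => K q1 q2 p1 x) = (fun t => ((q1^7*q2*p1^3) + (q1^5*q2^3*p1^2) * t + ((-1)*q1^3*q2^5*p1) * t ^ 2 + ((-1)*q1*q2^7) * t ^ 3 + (0) * t ^ 4 + (0) * t ^ 5 + (0) * t ^ 6 + (0) * t ^ 7 + (0) * t ^ 8 + (0) * t ^ 9 + (0) * t ^ 10) / (q1 - q2)) := by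
    funext t
    simp only [K]
    field_simp
    ring
  rw [hfe, deriv_P_div_const]
  field_simp
  ring

lemma dL_q1 (q1 q2 p1 p2 : ℝ) (h : q1 - q2 ≠ 0) :
    deriv (fun x => L x q2 p1 p2) q1 = ((-1)*q2^10*p2^4 + 2*q1*q2^9*p1*p2^3 + (-3)*q1^2*q2^8*p1*p2^3 + q1^3*q2^7*p1*p2^3 + 5*q1^4*q2^6*p1^2*p2^2 + (-3)*q1^5*q2^5*p1^2*p2^2 + (-7)*q1^6*q2^4*p1^3*p2 + 13*q1^7*q2^3*p1^3*p2 + (-2)*q1^7*q2^3*p1^4 + (-6)*q1^8*q2^2*p1^3*p2 + 6*q1^8*q2^2*p1^4 + (-11)*q1^9*q2*p1^4 + 6*q1^10*p1^4) / (q1 - q2) ^ 3 := by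
  have h' : q2 - q1 ≠ 0 := fun hc => h (by linarith [sub_eq_zero.mp hc])
  have hfe : (fun x => L x q2 p1 p2) = (fun t => (((3/4)*q2^10*p2^4) + ((-1/2)*q2^9*p2^4) * t + ((1/4)*q2^8*p2^4 + (-1)*q2^8*p1*p2^3) * t ^ 2 + (q2^7*p1*p2^3) * t ^ 3 + (0) * t ^ 4 + ((-1)*q2^5*p1^2*p2^2) * t ^ 5 + (0) * t ^ 6 + (q2^3*p1^3*p2) * t ^ 7 + ((-1)*q2^2*p1^3*p2 + (1/4)*q2^2*p1^4) * t ^ 8 + ((-1/2)*q2*p1^4) * t ^ 9 + ((3/4)*p1^4) * t ^ 10) / (t - q2) ^ 2) := by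
    funext t
    rcases eq_or_ne t q2 with rfl | ht
    · simp [L]
    · have h2 : t - q2 ≠ 0 := sub_ne_zero.mpr ht
      have h3 : q2 - t ≠ 0 := fun hc => h2 (by linarith [sub_eq_zero.mp hc])
      simp only [L]
      field_simp
      ring
  rw [hfe, deriv_P_div_sq (hx := h)]
  field_simp
  ring

lemma dL_q2 (q1 q2 p1 p2 : ℝ) (h : q1 - q2 ≠ 0) :
    deriv (fun x => L q1 x p1 p2) q2 = ((-6)*q2^10*p2^4 + 11*q1*q2^9*p2^4 + (-6)*q1^2*q2^8*p2^4 + 6*q1^2*q2^8*p1*p2^3 + 2*q1^3*q2^7*p2^4 + (-13)*q1^3*q2^7*p1*p2^3 + 7*q1^4*q2^6*p1*p2^3 + 3*q1^5*q2^5*p1^2*p2^2 + (-5)*q1^6*q2^4*p1^2*p2^2 + (-1)*q1^7*q2^3*p1^3*p2 + 3*q1^8*q2^2*p1^3*p2 + (-2)*q1^9*q2*p1^3*p2 + q1^10*p1^4) / (q1 - q2) ^ 3 := by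
  have h' : q2 - q1 ≠ 0 := fun hc => h (by linarith [sub_eq_zero.mp hc])
  have hfe : (fun x => L q1 x p1 p2) = (fun t => (((3/4)*q1^10*p1^4) + ((-1/2)*q1^9*p1^4) * t + ((-1)*q1^8*p1^3*p2 + (1/4)*q1^8*p1^4) * t ^ 2 + (q1^7*p1^3*p2) * t ^ 3 + (0) * t ^ 4 + ((-1)*q1^5*p1^2*p2^2) * t ^ 5 + (0) * t ^ 6 + (q1^3*p1*p2^3) * t ^ 7 + ((1/4)*q1^2*p2^4 + (-1)*q1^2*p1*p2^3) * t ^ 8 + ((-1/2)*q1*p2^4) * t ^ 9 + ((3/4)*p2^4) * t ^ 10) / (t - q1) ^ 2) := by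
    funext t
    rcases eq_or_ne t q1 with rfl | ht
    · simp [L]
    · have h2 : t - q1 ≠ 0 := sub_ne_zero.mpr ht
      have h3 : q1 - t ≠ 0 := fun hc => h2 (by linarith [sub_eq_zero.mp hc])
      simp only [L]
      field_simp
      ring
  rw [hfe, deriv_P_div_sq (hx := h')]
  field_simp
  ring

lemma dL_p1 (q1 q2 p1 p2 : ℝ) (h : q1 - q2 ≠ 0) :
    deriv (fun x => L q1 q2 x p2) p1 = ((-1)*q1^2*q2^8*p2^3 + q1^3*q2^7*p2^3 + (-2)*q1^5*q2^5*p1*p2^2 + 3*q1^7*q2^3*p1^2*p2 + (-3)*q1^8*q2^2*p1^2*p2 + q1^8*q2^2*p1^3 + (-2)*q1^9*q2*p1^3 + 3*q1^10*p1^3) / (q1 - q2) ^ 2 := by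
  have h' : q2 - q1 ≠ 0 := fun hc => h (by linarith [sub_eq_zero.mp hc])
  have hfe : (fun x => L q1 q2 x p2) = (fun t => (((3/4)*q2^10*p2^4 + (-1/2)*q1*q2^9*p2^4 + (1/4)*q1^2*q2^8*p2^4) + ((-1)*q1^2*q2^8*p2^3 + q1^3*q2^7*p2^3) * t + ((-1)*q1^5*q2^5*p2^2) * t ^ 2 + (q1^7*q2^3*p2 + (-1)*q1^8*q2^2*p2) * t ^ 3 + ((1/4)*q1^8*q2^2 + (-1/2)*q1^9*q2 + (3/4)*q1^10) * t ^ 4 + (0) * t ^ 5 + (0) * t ^ 6 + (0) * t ^ 7 + (0) * t ^ 8 + (0) * t ^ 9 + (0) * t ^ 10) / ((q1 - q2) ^ 2)) := by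
    funext t
    simp only [L]
    field_simp
    ring
  rw [hfe, deriv_P_div_const]
  field_simp
  ring

lemma dL_p2 (q1 q2 p1 p2 : ℝ) (h : q1 - q2 ≠ 0) :
    deriv (fun x => L q1 q2 p1 x) p2 = (3*q2^10*p2^3 + (-2)*q1*q2^9*p2^3 + q1^2*q2^8*p2^3 + (-3)*q1^2*q2^8*p1*p2^2 + 3*q1^3*q2^7*p1*p2^2 + (-2)*q1^5*q2^5*p1^2*p2 + q1^7*q2^3*p1^3 + (-1)*q1^8*q2^2*p1^3) / (q1 - q2) ^ 2 := by
  have h' : q2 - q1 ≠ 0 := fun hc => h (by linarith [sub_eq_zero.mp hc])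
  have hfe : (fun x => L q1 q2 p1 x) = (fun t => (((1/4)*q1^8*q2^2*p1^4 + (-1/2)*q1^9*q2*p1^4 + (3/4)*q1^10*p1^4) + (q1^7*q2^3*p1^3 + (-1)*q1^8*q2^2*p1^3) * t + ((-1)*q1^5*q2^5*p1^2) * t ^ 2 + ((-1)*q1^2*q2^8*p1 + q1^3*q2^7*p1) * t ^ 3 + ((3/4)*q2^10 + (-1/2)*q1*q2^9 + (1/4)*q1^2*q2^8) * t ^ 4 + (0) * t ^ 5 + (0) * t ^ 6 + (0) * t ^ 7 + (0) * t ^ 8 + (0) * t ^ 9 + (0) * t ^ 10) / ((q1 - q2) ^ 2)) := by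
    funext t
    simp only [L]
    field_simp
    ring
  rw [hfe, deriv_P_div_const]
  field_simp
  ring

theorem stmt9 (q1 q2 p1 p2 : ℝ) (h : q1 ≠ q2) :
    pb T L q1 q2 p1 p2 = 0 ∧ pb L K q1 q2 p1 p2 = (K q1 q2 p1 p2)^2 := by
  have hq : q1 - q2 ≠ 0 := sub_ne_zero.mpr h
  constructor
  · simp only [pb]
    rw [dT_q1 q1 q2 p1 p2 hq, dT_q2 q1 q2 p1 p2 hq, dT_p1 q1 q2 p1 p2 hq,
      dT_p2 q1 q2 p1 p2 hq, dL_q1 q1 q2 p1 p2 hq, dL_q2 q1 q2 p1 p2 hq,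
      dL_p1 q1 q2 p1 p2 hq, dL_p2 q1 q2 p1 p2 hq]
    field_simp
    ring
  · simp only [pb]
    rw [dK_q1 q1 q2 p1 p2 hq, dK_q2 q1 q2 p1 p2 hq, dK_p1 q1 q2 p1 p2 hq,
      dK_p2 q1 q2 p1 p2 hq, dL_q1 q1 q2 p1 p2 hq, dL_q2 q1 q2 p1 p2 hq,
      dL_p1 q1 q2 p1 p2 hq, dL_p2 q1 q2 p1 p2 hq]
    simp only [K]
    field_simp
    ring
end
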